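/- Assume the setup: κ is a singular cardinal with cf(κ) = ρ, 2^ρ ≤ κ, and ρ < μ_0, where ⟨μ_i : i < ρ⟩ is an increasing sequence cofinal in κ, each μ_i carries a μ_i-complete uniform ultrafilter U_i with an almost-decreasing generating sequence ⟨A^i_η : η < θ_i⟩ of regular length θ_i with A^i_η ⊆ [μ_i^*, μ_i) where μ_i^* = sup_{i'<i} μ_{i'}; ⟨f_α : α < σ⟩ is a scale in ∏_{i<ρ} μ_i with σ regular and κ < σ; ⟨g_β : β < τ⟩ is a scale in ∏_{i<ρ} θ_i with τ regular and σ ≤ τ; E is a uniform ultrafilter on ρ; and for X ∈ E, α < σ, β < τ set Y_{X,α,β} = ⋃_{i∈X} (A^i_{g_β(i)} \ f_α(i)). Then for every set Y ⊆ κ there exist X ∈ E, α < σ and β < τ such that either Y_{X,α,β} ⊆ Y or Y_{X,α,β} ⊆ κ \ Y; consequently the filter on κ generated by the sets Y_{X,α,β} is an ultrafilter. -/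

import Mathlib

/-!
For `Z ⊆ κ`, let `X₀` be the set of `i < ρ` with `Z ∩ μ i ∈ U i`; either `X₀` or its complement
is in `E`, say `X₀`. For `i ∈ X₀` the base property of `⟨A^i_η⟩` gives `η i` with
`A^i_{η i} ⊆* Z`. The scale `g` eventually dominates `η`, so almost-decreasingness gives
`A^i_{g_β(i)} ⊆* Z` eventually, with bounds `c i < μ i`; the scale `f` eventually dominates
`c`. Intersecting `X₀` with a tail of `ρ` (a member of `E` by uniformity) gives
`Y_{X,α,β} ⊆ Z`. The same argument applied to the pointwise intersections of two such sets
shows that the sets `Y_{X,α,β}` are downward directed, and uniformity of the `U i` makes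
them nonempty, so they generate an ultrafilter.
-/

universe u

open Cardinal Set

/-- `A ⊆* B` below the cardinal `κ`: the difference `A \ B` is bounded below `κ`
(where `κ` is identified with its set of ordinals `Set.Iio κ.ord`). -/
def AlmostSub (κ : Cardinal.{u}) (A B : Set Ordinal.{u}) : Prop :=
  ∃ β, β < κ.ord ∧ A \ B ⊆ Set.Iio β

/-- An ultrafilter on the cardinal `κ`, identified with its set of ordinals `Set.Iio κ.ord`. -/
structure UltrafilterOn (κ : Cardinal.{u}) : Type (u + 1) where
  sets : Set (Set Ordinal.{u})
  sets_subset : ∀ A ∈ sets, A ⊆ Set.Iio κ.ord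
  univ_mem : Set.Iio κ.ord ∈ sets
  superset_mem : ∀ A ∈ sets, ∀ B, B ⊆ Set.Iio κ.ord → A ⊆ B → B ∈ sets
  inter_mem : ∀ A ∈ sets, ∀ B ∈ sets, A ∩ B ∈ sets
  empty_not_mem : ∅ ∉ sets
  mem_or_compl_mem : ∀ A, A ⊆ Set.Iio κ.ord → A ∈ sets ∨ Set.Iio κ.ord \ A ∈ sets

namespace UltrafilterOn

variable {κ : Cardinal.{u}}

/-- A uniform ultrafilter: every member has cardinality `κ`. -/
def IsUniform (U : UltrafilterOn κ) : Prop :=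
  ∀ A ∈ U.sets, #A = Cardinal.lift.{u + 1, u} κ

/-- `κ`-completeness: `U` is closed under intersections of fewer than `κ` many of its members. -/
def IsComplete (U : UltrafilterOn κ) : Prop :=
  ∀ S : Set (Set Ordinal.{u}), S.Nonempty → S ⊆ U.sets →
    #S < Cardinal.lift.{u + 1, u} κ → ⋂₀ S ∈ U.sets

/-- Nonprincipal: no singleton is a member. -/
def IsNonprincipal (U : UltrafilterOn κ) : Prop :=
  ∀ β : Ordinal.{u}, {β} ∉ U.sets

/-- A base for `U`: a subfamily `B ⊆ U` such that every member of `U` almost contains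
a member of `B`. -/
def IsBase (U : UltrafilterOn κ) (B : Set (Set Ordinal.{u})) : Prop :=
  B ⊆ U.sets ∧ ∀ X ∈ U.sets, ∃ Y ∈ B, AlmostSub κ Y X

/-- The character of `U`: the least cardinality of a base for `U`. -/
noncomputable def char (U : UltrafilterOn κ) : Cardinal.{u + 1} :=
  sInf {c | ∃ B, U.IsBase B ∧ #B = c}

/-- `⟨A i : i < θord⟩` is an almost-decreasing generating sequence for `U`:
its entries are members of `U`, it is `⊆*`-decreasing, and its range is a base for `U`. -/
def IsADGenSeq (U : UltrafilterOn κ) (θord : Ordinal.{u})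
    (A : Ordinal.{u} → Set Ordinal.{u}) : Prop :=
  (∀ i, i < θord → A i ∈ U.sets) ∧
  (∀ i j, i ≤ j → j < θord → AlmostSub κ (A j) (A i)) ∧
  U.IsBase (A '' Set.Iio θord)

/-- A normal measure on `κ`: a `κ`-complete nonprincipal ultrafilter such that every
function regressive on a member of `U` is constant on a member of `U`. -/
def IsNormalMeasure (U : UltrafilterOn κ) : Prop :=
  U.IsComplete ∧ U.IsNonprincipal ∧
  ∀ f : Ordinal.{u} → Ordinal.{u},
    (∃ X ∈ U.sets, ∀ α ∈ X, f α < α) → ∃ Y ∈ U.sets, ∃ c, ∀ α ∈ Y, f α = c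

end UltrafilterOn

/-- `κ` is a measurable cardinal: it is uncountable and carries a `κ`-complete
nonprincipal ultrafilter. -/
def IsMeasurableCard (κ : Cardinal.{u}) : Prop :=
  ℵ₀ < κ ∧ ∃ U : UltrafilterOn κ, U.IsComplete ∧ U.IsNonprincipal

/-- `f <* g`: eventual (pointwise) domination below `ρord`. -/
def EvDomLt (ρord : Ordinal.{u}) (f g : Ordinal.{u} → Ordinal.{u}) : Prop :=
  ∃ i₀, i₀ < ρord ∧ ∀ i, i₀ ≤ i → i < ρord → f i < g i

/-- Membership in the product `∏_{i < ρord} lam i` (of cardinals `lam i`). -/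
def InProd (ρord : Ordinal.{u}) (lam : Ordinal.{u} → Cardinal.{u})
    (f : Ordinal.{u} → Ordinal.{u}) : Prop :=
  ∀ i, i < ρord → f i < (lam i).ord

/-- `⟨g η : η < ν⟩` is a scale of length `ν` in `∏_{i < ρord} lam i`:
a `<*`-increasing and `<*`-cofinal sequence in the product. -/
def IsScale (ρord : Ordinal.{u}) (lam : Ordinal.{u} → Cardinal.{u}) (ν : Cardinal.{u})
    (g : Ordinal.{u} → Ordinal.{u} → Ordinal.{u}) : Prop :=
  (∀ η, η < ν.ord → InProd ρord lam (g η)) ∧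
  (∀ η₁ η₂, η₁ < η₂ → η₂ < ν.ord → EvDomLt ρord (g η₁) (g η₂)) ∧
  ∀ f, InProd ρord lam f → ∃ η, η < ν.ord ∧ EvDomLt ρord f (g η)

/-- `supBelow μ i = sup_{i' < i} μ i'`. -/
noncomputable def supBelow (μ : Ordinal.{u} → Cardinal.{u}) (i : Ordinal.{u}) : Cardinal.{u} :=
  sSup {c | ∃ i', i' < i ∧ c = μ i'}

theorem AlmostSub.trans {κ : Cardinal.{u}} {A B C : Set Ordinal.{u}}
    (hAB : AlmostSub κ A B) (hBC : AlmostSub κ B C) : AlmostSub κ A C := by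
  obtain ⟨b, hb, hAB⟩ := hAB
  obtain ⟨c, hc, hBC⟩ := hBC
  refine ⟨max b c, max_lt hb hc, fun x hx => ?_⟩
  by_cases hxB : x ∈ B
  · exact (hBC ⟨hxB, hx.2⟩).trans_le (le_max_right b c)
  · exact (hAB ⟨hx.1, hxB⟩).trans_le (le_max_left b c)

theorem AlmostSub.exists_diff_Iio_subset {κ : Cardinal.{u}} {A B : Set Ordinal.{u}}
    (h : AlmostSub κ A B) : ∃ c, c < κ.ord ∧ A \ Iio c ⊆ B := by
  obtain ⟨c, hc, h⟩ := h
  exact ⟨c, hc, fun x hx => by_contra fun hxB => hx.2 (h ⟨hx.1, hxB⟩)⟩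

theorem exists_inProd {ρord : Ordinal.{u}} {lam : Ordinal.{u} → Cardinal.{u}}
    {P : Ordinal.{u} → Ordinal.{u} → Prop} (h : ∀ i, i < ρord → ∃ x, x < (lam i).ord ∧ P i x) :
    ∃ F, InProd ρord lam F ∧ ∀ i, i < ρord → P i (F i) := by
  choose F hF hP using h
  refine ⟨fun i => if hi : i < ρord then F i hi else 0, fun i hi => ?_, fun i hi => ?_⟩
  · simpa only [dif_pos hi] using hF i hi
  · simpa only [dif_pos hi] using hP i hi

namespace UltrafilterOn

variable {κ : Cardinal.{u}}

theorem nonempty_of_mem (U : UltrafilterOn κ) {A : Set Ordinal.{u}} (hA : A ∈ U.sets) :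
    A.Nonempty :=
  nonempty_iff_ne_empty.2 fun h => U.empty_not_mem (h ▸ hA)

theorem ord_pos (U : UltrafilterOn κ) : 0 < κ.ord := by
  obtain ⟨x, hx⟩ := U.nonempty_of_mem U.univ_mem
  exact (zero_le (a := x)).trans_lt hx

theorem diff_mem_of_notMem (U : UltrafilterOn κ) {Z : Set Ordinal.{u}}
    (hZ : Z ∩ Iio κ.ord ∉ U.sets) :
    Iio κ.ord \ Z ∈ U.sets := by
  simpa only [sdiff_inter_self_eq_sdiff] using
    (U.mem_or_compl_mem _ inter_subset_right).resolve_left hZ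

variable {U : UltrafilterOn κ}

theorem IsUniform.notMem_of_subset_Iio (hU : U.IsUniform) {B : Set Ordinal.{u}} {c : Ordinal.{u}}
    (hc : c < κ.ord) (hB : B ⊆ Iio c) : B ∉ U.sets := fun hBU => by
  have hcard : #B ≤ Cardinal.lift.{u + 1} c.card :=
    (mk_le_mk_of_subset hB).trans_eq (Cardinal.mk_Iio_ordinal c)
  rw [hU B hBU, Cardinal.lift_le] at hcard
  exact hcard.not_gt (Cardinal.lt_ord.1 hc)

theorem IsUniform.diff_Iio_mem (hU : U.IsUniform) {A : Set Ordinal.{u}} {c : Ordinal.{u}}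
    (hA : A ∈ U.sets) (hc : c < κ.ord) : A \ Iio c ∈ U.sets := by
  refine (U.mem_or_compl_mem _ (sdiff_subset.trans (U.sets_subset A hA))).resolve_right
    fun hcompl => hU.notMem_of_subset_Iio hc ?_ (U.inter_mem _ hA _ hcompl)
  exact fun x hx => by_contra fun hxc => hx.2.2 ⟨hx.1, hxc⟩

def ofBase (𝓑 : Set (Set Ordinal.{u})) (hne : ∀ B ∈ 𝓑, B.Nonempty)
    (hdir : ∀ B₁ ∈ 𝓑, ∀ B₂ ∈ 𝓑, ∃ B ∈ 𝓑, B ⊆ B₁ ∩ B₂)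
    (hdecide : ∀ Z ⊆ Iio κ.ord, ∃ B ∈ 𝓑, B ⊆ Z ∨ B ⊆ Iio κ.ord \ Z) : UltrafilterOn κ where
  sets := {Z | Z ⊆ Iio κ.ord ∧ ∃ B ∈ 𝓑, B ⊆ Z}
  sets_subset _ hZ := hZ.1
  univ_mem := by
    obtain ⟨B, hB, h | h⟩ := hdecide _ subset_rfl
    exacts [⟨subset_rfl, B, hB, h⟩, ⟨subset_rfl, B, hB, h.trans sdiff_subset⟩]
  superset_mem _ hZ _ hZ' hZZ' := ⟨hZ', hZ.2.imp fun _ hB => ⟨hB.1, hB.2.trans hZZ'⟩⟩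
  inter_mem := by
    rintro Z₁ ⟨hZ₁, B₁, hB₁, h₁⟩ Z₂ ⟨-, B₂, hB₂, h₂⟩
    obtain ⟨B, hB, h⟩ := hdir B₁ hB₁ B₂ hB₂
    exact ⟨inter_subset_left.trans hZ₁, B, hB, h.trans (inter_subset_inter h₁ h₂)⟩
  empty_not_mem := fun ⟨_, B, hB, hB0⟩ => (hne B hB).ne_empty (subset_empty_iff.1 hB0)
  mem_or_compl_mem Z hZ := by
    obtain ⟨B, hB, h | h⟩ := hdecide Z hZ
    exacts [Or.inl ⟨hZ, B, hB, h⟩, Or.inr ⟨sdiff_subset, B, hB, h⟩]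

end UltrafilterOn

section Scales

variable {κ ρ σ τ : Cardinal.{u}} {μ θ : Ordinal.{u} → Cardinal.{u}}
  {Ui : (i : Ordinal.{u}) → UltrafilterOn (μ i)} {A : Ordinal.{u} → Ordinal.{u} → Set Ordinal.{u}}
  {f g : Ordinal.{u} → Ordinal.{u} → Ordinal.{u}} {E : UltrafilterOn ρ}

theorem exists_eventually_diff_Iio_subset
    (hA : ∀ i, i < ρ.ord → (Ui i).IsADGenSeq (θ i).ord (A i))
    (hf : IsScale ρ.ord μ σ f) (hg : IsScale ρ.ord θ τ g)
    {T : Ordinal.{u} → Set Ordinal.{u}} (hT : ∀ i, i < ρ.ord → T i ∈ (Ui i).sets) :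
    ∃ α, α < σ.ord ∧ ∃ β, β < τ.ord ∧ ∃ i₀, i₀ < ρ.ord ∧
      ∀ i, i₀ ≤ i → i < ρ.ord → A i (g β i) \ Iio (f α i) ⊆ T i := by
  obtain ⟨η, hη, hηT⟩ : ∃ η, InProd ρ.ord θ η ∧
      ∀ i, i < ρ.ord → AlmostSub (μ i) (A i (η i)) (T i) :=
    exists_inProd fun i hi => by
      obtain ⟨_, ⟨η, hη, rfl⟩, hsub⟩ := (hA i hi).2.2.2 (T i) (hT i hi)
      exact ⟨η, hη, hsub⟩
  obtain ⟨β, hβ, i₀, hi₀, hηβ⟩ := hg.2.2 η hη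
  obtain ⟨c, hc, hcT⟩ : ∃ c, InProd ρ.ord μ c ∧
      ∀ i, i < ρ.ord → i₀ ≤ i → A i (g β i) \ Iio (c i) ⊆ T i :=
    exists_inProd (P := fun i c => i₀ ≤ i → A i (g β i) \ Iio c ⊆ T i) fun i hi => by
      by_cases hi₀i : i₀ ≤ i
      · have hβT := ((hA i hi).2.1 _ _ (hηβ i hi₀i hi).le (hg.1 β hβ i hi)).trans (hηT i hi)
        obtain ⟨c, hc, hsub⟩ := hβT.exists_diff_Iio_subset
        exact ⟨c, hc, fun _ => hsub⟩
      · exact ⟨0, (Ui i).ord_pos, fun h => absurd h hi₀i⟩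
  obtain ⟨α, hα, i₁, hi₁, hcα⟩ := hf.2.2 c hc
  refine ⟨α, hα, β, hβ, max i₀ i₁, max_lt hi₀ hi₁, fun i hi hiρ x hx => ?_⟩
  exact hcT i hiρ (le_of_max_le_left hi)
    ⟨hx.1, fun hxc => hx.2 (hxc.trans (hcα i (le_of_max_le_right hi) hiρ))⟩

theorem exists_iUnion_diff_Iio_subset
    (hA : ∀ i, i < ρ.ord → (Ui i).IsADGenSeq (θ i).ord (A i))
    (hf : IsScale ρ.ord μ σ f) (hg : IsScale ρ.ord θ τ g) (hE : E.IsUniform)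
    {X : Set Ordinal.{u}} (hX : X ∈ E.sets)
    {T : Ordinal.{u} → Set Ordinal.{u}} (hT : ∀ i ∈ X, T i ∈ (Ui i).sets) :
    ∃ X' ∈ E.sets, ∃ α, α < σ.ord ∧ ∃ β, β < τ.ord ∧
      ⋃ i ∈ X', (A i (g β i) \ Iio (f α i)) ⊆ ⋃ i ∈ X, T i := by
  classical
  obtain ⟨α, hα, β, hβ, i₀, hi₀, hsub⟩ := exists_eventually_diff_Iio_subset hA hf hg
    (T := fun i => if i ∈ X then T i else Iio (μ i).ord) fun i _ => by
      split_ifs with hiX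
      exacts [hT i hiX, (Ui i).univ_mem]
  refine ⟨X ∩ (Iio ρ.ord \ Iio i₀), E.inter_mem _ hX _ (hE.diff_Iio_mem E.univ_mem hi₀),
    α, hα, β, hβ, iUnion₂_subset fun i ⟨hiX, hiρ, hi₀i⟩ => ?_⟩
  have hsubT := hsub i (not_lt.1 hi₀i) hiρ
  rw [if_pos hiX] at hsubT
  exact hsubT.trans (subset_biUnion_of_mem hiX)

theorem diff_Iio_mem_of_isScale (hU : ∀ i, i < ρ.ord → (Ui i).IsUniform)
    (hA : ∀ i, i < ρ.ord → (Ui i).IsADGenSeq (θ i).ord (A i))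
    (hf : IsScale ρ.ord μ σ f) (hg : IsScale ρ.ord θ τ g)
    {i α β : Ordinal.{u}} (hi : i < ρ.ord) (hα : α < σ.ord) (hβ : β < τ.ord) :
    A i (g β i) \ Iio (f α i) ∈ (Ui i).sets :=
  (hU i hi).diff_Iio_mem ((hA i hi).1 _ (hg.1 β hβ i hi)) (hf.1 α hα i hi)

theorem iUnion_diff_Iio_nonempty (hU : ∀ i, i < ρ.ord → (Ui i).IsUniform)
    (hA : ∀ i, i < ρ.ord → (Ui i).IsADGenSeq (θ i).ord (A i))
    (hf : IsScale ρ.ord μ σ f) (hg : IsScale ρ.ord θ τ g)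
    {X : Set Ordinal.{u}} {α β : Ordinal.{u}} (hX : X ∈ E.sets) (hα : α < σ.ord)
    (hβ : β < τ.ord) : (⋃ i ∈ X, (A i (g β i) \ Iio (f α i))).Nonempty := by
  obtain ⟨i, hi⟩ := E.nonempty_of_mem hX
  obtain ⟨x, hx⟩ := (Ui i).nonempty_of_mem
    (diff_Iio_mem_of_isScale hU hA hf hg (E.sets_subset X hX hi) hα hβ)
  exact ⟨x, mem_biUnion hi hx⟩

theorem exists_iUnion_diff_Iio_subset_inter (hU : ∀ i, i < ρ.ord → (Ui i).IsUniform)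
    (hA : ∀ i, i < ρ.ord → (Ui i).IsADGenSeq (θ i).ord (A i))
    (hf : IsScale ρ.ord μ σ f) (hg : IsScale ρ.ord θ τ g) (hE : E.IsUniform)
    {X₁ X₂ : Set Ordinal.{u}} {α₁ α₂ β₁ β₂ : Ordinal.{u}} (hX₁ : X₁ ∈ E.sets) (hX₂ : X₂ ∈ E.sets)
    (hα₁ : α₁ < σ.ord) (hα₂ : α₂ < σ.ord) (hβ₁ : β₁ < τ.ord) (hβ₂ : β₂ < τ.ord) :
    ∃ X ∈ E.sets, ∃ α, α < σ.ord ∧ ∃ β, β < τ.ord ∧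
      ⋃ i ∈ X, (A i (g β i) \ Iio (f α i)) ⊆
        (⋃ i ∈ X₁, (A i (g β₁ i) \ Iio (f α₁ i))) ∩ ⋃ i ∈ X₂, (A i (g β₂ i) \ Iio (f α₂ i)) := by
  obtain ⟨X, hX, α, hα, β, hβ, hsub⟩ :=
    exists_iUnion_diff_Iio_subset hA hf hg hE (E.inter_mem _ hX₁ _ hX₂)
      (T := fun i => (A i (g β₁ i) \ Iio (f α₁ i)) ∩ (A i (g β₂ i) \ Iio (f α₂ i)))
      fun i hi => (Ui i).inter_mem
        _ (diff_Iio_mem_of_isScale hU hA hf hg (E.sets_subset _ hX₁ hi.1) hα₁ hβ₁)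
        _ (diff_Iio_mem_of_isScale hU hA hf hg (E.sets_subset _ hX₁ hi.1) hα₂ hβ₂)
  exact ⟨X, hX, α, hα, β, hβ, hsub.trans <| iUnion₂_subset fun i hi =>
    fun x hx => ⟨mem_biUnion hi.1 hx.1, mem_biUnion hi.2 hx.2⟩⟩

theorem exists_iUnion_diff_Iio_subset_or_subset_compl (hμκ : ∀ i, i < ρ.ord → μ i < κ)
    (hA : ∀ i, i < ρ.ord → (Ui i).IsADGenSeq (θ i).ord (A i))
    (hf : IsScale ρ.ord μ σ f) (hg : IsScale ρ.ord θ τ g) (hE : E.IsUniform)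
    (Z : Set Ordinal.{u}) :
    ∃ X ∈ E.sets, ∃ α, α < σ.ord ∧ ∃ β, β < τ.ord ∧
      (⋃ i ∈ X, (A i (g β i) \ Iio (f α i)) ⊆ Z ∨
        ⋃ i ∈ X, (A i (g β i) \ Iio (f α i)) ⊆ Iio κ.ord \ Z) := by
  rcases E.mem_or_compl_mem {i | i < ρ.ord ∧ Z ∩ Iio (μ i).ord ∈ (Ui i).sets}
    (fun i hi => hi.1) with hX₀ | hX₀
  · obtain ⟨X, hX, α, hα, β, hβ, hsub⟩ :=
      exists_iUnion_diff_Iio_subset hA hf hg hE hX₀ (T := fun i => Z ∩ Iio (μ i).ord)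
        fun i hi => hi.2
    exact ⟨X, hX, α, hα, β, hβ, Or.inl (hsub.trans (iUnion₂_subset fun _ _ => inter_subset_left))⟩
  · obtain ⟨X, hX, α, hα, β, hβ, hsub⟩ :=
      exists_iUnion_diff_Iio_subset hA hf hg hE hX₀ (T := fun i => Iio (μ i).ord \ Z)
        fun i hi => (Ui i).diff_mem_of_notMem fun hZ => hi.2 ⟨hi.1, hZ⟩
    refine ⟨X, hX, α, hα, β, hβ, Or.inr (hsub.trans (iUnion₂_subset fun i hi => ?_))⟩
    exact sdiff_subset_sdiff_left (Iio_subset_Iio (ord_le_ord.2 (hμκ i hi.1).le))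

end Scales

theorem statement2_general
    (κ ρ σ τ : Cardinal.{u})
    (μ θ : Ordinal.{u} → Cardinal.{u})
    (hμlt : ∀ i, i < ρ.ord → μ i < κ)
    (Ui : (i : Ordinal.{u}) → UltrafilterOn (μ i))
    (A : Ordinal.{u} → Ordinal.{u} → Set Ordinal.{u})
    (hUi : ∀ i, i < ρ.ord → (Ui i).IsUniform ∧ (Ui i).IsComplete ∧
      (Ui i).IsADGenSeq (θ i).ord (A i))
    (f g : Ordinal.{u} → Ordinal.{u} → Ordinal.{u})
    (hf : IsScale ρ.ord μ σ f)
    (hg : IsScale ρ.ord θ τ g)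
    (E : UltrafilterOn ρ) (hE : E.IsUniform)
    (Y : Set Ordinal.{u} → Ordinal.{u} → Ordinal.{u} → Set Ordinal.{u})
    (hY : ∀ X α β, Y X α β = ⋃ i ∈ X, (A i (g β i) \ Set.Iio (f α i)))
    :
    (∀ Z, Z ⊆ Set.Iio κ.ord → ∃ X ∈ E.sets, ∃ α, α < σ.ord ∧ ∃ β, β < τ.ord ∧
      (Y X α β ⊆ Z ∨ Y X α β ⊆ Set.Iio κ.ord \ Z)) ∧
    ∃ W : UltrafilterOn κ, W.sets =
      {Z | Z ⊆ Set.Iio κ.ord ∧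
        ∃ X ∈ E.sets, ∃ α, α < σ.ord ∧ ∃ β, β < τ.ord ∧ Y X α β ⊆ Z} := by
  have hU i hi := (hUi i hi).1
  have hA i hi := (hUi i hi).2.2
  simp only [hY]
  have hdecide Z (_ : Z ⊆ Iio κ.ord) :=
    exists_iUnion_diff_Iio_subset_or_subset_compl hμlt hA hf hg hE Z
  let 𝓑 := {B | ∃ X ∈ E.sets, ∃ α, α < σ.ord ∧ ∃ β, β < τ.ord ∧
    B = ⋃ i ∈ X, (A i (g β i) \ Iio (f α i))}
  refine ⟨hdecide, UltrafilterOn.ofBase 𝓑 ?_ ?_ ?_, ?_⟩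
  · rintro _ ⟨X, hX, α, hα, β, hβ, rfl⟩
    exact iUnion_diff_Iio_nonempty hU hA hf hg hX hα hβ
  · rintro _ ⟨X₁, hX₁, α₁, hα₁, β₁, hβ₁, rfl⟩ _ ⟨X₂, hX₂, α₂, hα₂, β₂, hβ₂, rfl⟩
    obtain ⟨X, hX, α, hα, β, hβ, h⟩ :=
      exists_iUnion_diff_Iio_subset_inter hU hA hf hg hE hX₁ hX₂ hα₁ hα₂ hβ₁ hβ₂
    exact ⟨_, ⟨X, hX, α, hα, β, hβ, rfl⟩, h⟩
  · intro Z hZ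
    obtain ⟨X, hX, α, hα, β, hβ, h⟩ := hdecide Z hZ
    exact ⟨_, ⟨X, hX, α, hα, β, hβ, rfl⟩, h⟩
  · ext Z
    constructor
    · rintro ⟨hZ, _, ⟨X, hX, α, hα, β, hβ, rfl⟩, h⟩
      exact ⟨hZ, X, hX, α, hα, β, hβ, h⟩
    · rintro ⟨hZ, X, hX, α, hα, β, hβ, h⟩
      exact ⟨hZ, _, ⟨X, hX, α, hα, β, hβ, rfl⟩, h⟩

/-- for every `Z ⊆ κ` some `Y X α β` is contained in `Z` or in its
complement; consequently the filter generated by the sets `Y X α β` is an ultrafilter. -/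
theorem statement2
    (κ ρ σ τ : Cardinal.{u})
    (hκinf : ℵ₀ ≤ κ) (hκsing : κ.ord.cof < κ) (hκcof : κ.ord.cof = ρ)
    (h2ρ : 2 ^ ρ ≤ κ)
    (μ θ : Ordinal.{u} → Cardinal.{u})
    (hρμ0 : ρ < μ 0)
    (hμmono : ∀ i j, i < j → j < ρ.ord → μ i < μ j)
    (hμlt : ∀ i, i < ρ.ord → μ i < κ)
    (hμcofinal : ∀ c, c < κ → ∃ i, i < ρ.ord ∧ c ≤ μ i)
    (hθreg : ∀ i, i < ρ.ord → (θ i).IsRegular)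
    (Ui : (i : Ordinal.{u}) → UltrafilterOn (μ i))
    (A : Ordinal.{u} → Ordinal.{u} → Set Ordinal.{u})
    (hUi : ∀ i, i < ρ.ord → (Ui i).IsUniform ∧ (Ui i).IsComplete ∧
      (Ui i).IsADGenSeq (θ i).ord (A i))
    (hAsub : ∀ i, i < ρ.ord → ∀ η, η < (θ i).ord →
      A i η ⊆ Set.Ico (supBelow μ i).ord (μ i).ord)
    (f g : Ordinal.{u} → Ordinal.{u} → Ordinal.{u})
    (hσreg : σ.IsRegular) (hκσ : κ < σ)
    (hf : IsScale ρ.ord μ σ f)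
    (hτreg : τ.IsRegular) (hστ : σ ≤ τ)
    (hg : IsScale ρ.ord θ τ g)
    (E : UltrafilterOn ρ) (hE : E.IsUniform)
    (Y : Set Ordinal.{u} → Ordinal.{u} → Ordinal.{u} → Set Ordinal.{u})
    (hY : ∀ X α β, Y X α β = ⋃ i ∈ X, (A i (g β i) \ Set.Iio (f α i)))
    :
    (∀ Z, Z ⊆ Set.Iio κ.ord → ∃ X ∈ E.sets, ∃ α, α < σ.ord ∧ ∃ β, β < τ.ord ∧
      (Y X α β ⊆ Z ∨ Y X α β ⊆ Set.Iio κ.ord \ Z)) ∧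
    ∃ W : UltrafilterOn κ, W.sets =
      {Z | Z ⊆ Set.Iio κ.ord ∧
        ∃ X ∈ E.sets, ∃ α, α < σ.ord ∧ ∃ β, β < τ.ord ∧ Y X α β ⊆ Z} :=
  statement2_general κ ρ σ τ μ θ hμlt Ui A hUi f g hf hg E hE Y hY
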